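/- Define the part metric on positive definite matrices by d(X, Y) = inf{log α : α ≥ 1, αX ⪰ Y ⪰ α⁻¹X}. Then d is subadditive under matrix addition: d(X₁ + X₂, Y₁ + Y₂) ≤ d(X₁, Y₁) + d(X₂, Y₂). -/

import Mathlib

open Matrix

/-- The part (Birkhoff) metric on positive definite matrices. -/
noncomputable def partMetric {n : ℕ} (X Y : Matrix (Fin n) (Fin n) ℝ) : ℝ :=
  sInf (Real.log '' {α : ℝ | 1 ≤ α ∧ (α • X - Y).PosSemidef ∧ (Y - α⁻¹ • X).PosSemidef})

lemma psd_smul {n : ℕ} {A : Matrix (Fin n) (Fin n) ℝ} (hA : A.PosSemidef) {c : ℝ}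
    (hc : 0 ≤ c) : (c • A).PosSemidef := by
  constructor
  · unfold Matrix.IsHermitian
    rw [conjTranspose_smul, hA.1.eq]
    simp
  · exact (hA.smul hc).2

/-- For hermitian Z there is α ≥ 1 with α•1 - Z psd. -/
lemma exists_smul_one_sub {n : ℕ} {Z : Matrix (Fin n) (Fin n) ℝ} (hZ : Z.IsHermitian) :
    ∃ α : ℝ, 1 ≤ α ∧ (α • (1 : Matrix (Fin n) (Fin n) ℝ) - Z).PosSemidef := by
  set α : ℝ := 1 + ∑ i, |hZ.eigenvalues i| with hα
  have hα1 : 1 ≤ α := by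
    have : 0 ≤ ∑ i, |hZ.eigenvalues i| := Finset.sum_nonneg fun i _ => abs_nonneg _
    linarith
  refine ⟨α, hα1, ?_⟩
  have hle : ∀ i, hZ.eigenvalues i ≤ α := by
    intro i
    have h1 : |hZ.eigenvalues i| ≤ ∑ j, |hZ.eigenvalues j| :=
      Finset.single_le_sum (f := fun j => |hZ.eigenvalues j|) (fun j _ => abs_nonneg _)
        (Finset.mem_univ i)
    have := le_abs_self (hZ.eigenvalues i)
    linarith
  set U : Matrix (Fin n) (Fin n) ℝ := (hZ.eigenvectorUnitary : Matrix (Fin n) (Fin n) ℝ) with hU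
  have hUU : U * star U = 1 := Matrix.mem_unitaryGroup_iff.mp hZ.eigenvectorUnitary.2
  have key : α • (1 : Matrix (Fin n) (Fin n) ℝ) - Z
      = U * diagonal (fun i => α - hZ.eigenvalues i) * star U := by
    have hspec := hZ.spectral_theorem
    have h1 : α • (1 : Matrix (Fin n) (Fin n) ℝ) = U * (α • (1 : Matrix (Fin n) (Fin n) ℝ)) * star U := by
      rw [Matrix.mul_smul, mul_one, Matrix.smul_mul, hUU]
    rw [h1]
    nth_rewrite 1 [hspec]
    rw [Unitary.conjStarAlgAut_apply, ← hU]
    rw [← Matrix.sub_mul, ← Matrix.mul_sub]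
    have hd : α • (1 : Matrix (Fin n) (Fin n) ℝ) - diagonal (RCLike.ofReal ∘ hZ.eigenvalues)
        = diagonal (fun i => α - hZ.eigenvalues i) := by
      rw [smul_one_eq_diagonal, diagonal_sub]
      congr 1
    rw [hd]
  rw [key]
  have : star U = Uᴴ := rfl
  rw [this]
  exact (Matrix.PosSemidef.diagonal (fun i => sub_nonneg.mpr (hle i))).mul_mul_conjTranspose_same U

/-- For X posdef and Y hermitian, there is α ≥ 1 with α•X - Y psd. -/
lemma exists_smul_sub_psd {n : ℕ} {X Y : Matrix (Fin n) (Fin n) ℝ} (hX : X.PosDef)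
    (hY : Y.IsHermitian) : ∃ α : ℝ, 1 ≤ α ∧ (α • X - Y).PosSemidef := by
  set S : Matrix (Fin n) (Fin n) ℝ := (open scoped MatrixOrder in CFC.sqrt X) with hSdef
  have hS : S.PosSemidef := by open scoped MatrixOrder in exact (CFC.sqrt_nonneg X).posSemidef
  have hSS : S * S = X := by
    open scoped MatrixOrder in exact CFC.sqrt_mul_sqrt_self X hX.posSemidef.nonneg
  have hdet : IsUnit S.det := by
    have hXdet : 0 < X.det := hX.det_pos
    have : S.det * S.det = X.det := by rw [← det_mul, hSS]
    refine isUnit_iff_ne_zero.mpr fun h0 => ?_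
    rw [h0, mul_zero] at this
    linarith
  have hSinv_mul : S⁻¹ * S = 1 := Matrix.nonsing_inv_mul S hdet
  have hS_mulinv : S * S⁻¹ = 1 := Matrix.mul_nonsing_inv S hdet
  have hSinvH : S⁻¹ᴴ = S⁻¹ := by rw [Matrix.conjTranspose_nonsing_inv, hS.1.eq]
  set Z : Matrix (Fin n) (Fin n) ℝ := S⁻¹ * Y * S⁻¹ with hZdef
  have hZ : Z.IsHermitian := by
    unfold Matrix.IsHermitian
    rw [hZdef, conjTranspose_mul, conjTranspose_mul, hSinvH, hY.eq, Matrix.mul_assoc]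
  obtain ⟨α, hα1, hpsd⟩ := exists_smul_one_sub hZ
  refine ⟨α, hα1, ?_⟩
  have key : α • X - Y = S * (α • (1 : Matrix (Fin n) (Fin n) ℝ) - Z) * S := by
    rw [Matrix.mul_sub, Matrix.sub_mul]
    congr 1
    · rw [Matrix.mul_smul, mul_one, Matrix.smul_mul, hSS]
    · rw [hZdef]
      calc Y = (S * S⁻¹) * Y * (S⁻¹ * S) := by
            rw [hS_mulinv, hSinv_mul, one_mul, mul_one]
        _ = S * (S⁻¹ * Y * S⁻¹) * S := by noncomm_ring
  rw [key]
  have : S * (α • (1 : Matrix (Fin n) (Fin n) ℝ) - Z) * S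
      = S * (α • (1 : Matrix (Fin n) (Fin n) ℝ) - Z) * Sᴴ := by rw [hS.1.eq]
  rw [this]
  exact hpsd.mul_mul_conjTranspose_same S

/-- Membership set for the part metric. -/
def pmSet {n : ℕ} (X Y : Matrix (Fin n) (Fin n) ℝ) : Set ℝ :=
  {α : ℝ | 1 ≤ α ∧ (α • X - Y).PosSemidef ∧ (Y - α⁻¹ • X).PosSemidef}

lemma pmSet_nonempty {n : ℕ} {X Y : Matrix (Fin n) (Fin n) ℝ} (hX : X.PosDef) (hY : Y.PosDef) :
    (pmSet X Y).Nonempty := by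
  obtain ⟨α₁, hα₁, h1⟩ := exists_smul_sub_psd hX hY.1
  obtain ⟨α₂, hα₂, h2⟩ := exists_smul_sub_psd hY hX.1
  refine ⟨max α₁ α₂, le_trans hα₁ (le_max_left _ _), ?_, ?_⟩
  · have : (max α₁ α₂) • X - Y = (α₁ • X - Y) + (max α₁ α₂ - α₁) • X := by
      rw [sub_smul]; abel
    rw [this]
    exact h1.add (psd_smul hX.posSemidef (by simp [le_max_left]))
  · have hpos : 0 < max α₁ α₂ := lt_of_lt_of_le one_pos (le_trans hα₁ (le_max_left _ _))
    have h3 : ((max α₁ α₂) • Y - X).PosSemidef := by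
      have : (max α₁ α₂) • Y - X = (α₂ • Y - X) + (max α₁ α₂ - α₂) • Y := by
        rw [sub_smul]; abel
      rw [this]
      exact h2.add (psd_smul hY.posSemidef (by simp [le_max_right]))
    have : Y - (max α₁ α₂)⁻¹ • X = (max α₁ α₂)⁻¹ • ((max α₁ α₂) • Y - X) := by
      rw [smul_sub, smul_smul, inv_mul_cancel₀ (ne_of_gt hpos), one_smul]
    rw [this]
    exact psd_smul h3 (inv_nonneg.mpr hpos.le)

lemma pmSet_mono {n : ℕ} {X Y : Matrix (Fin n) (Fin n) ℝ} (hX : X.PosDef)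
    {α β : ℝ} (hαβ : α ≤ β) (hα : α ∈ pmSet X Y) : β ∈ pmSet X Y := by
  obtain ⟨h1, h2, h3⟩ := hα
  have hαpos : 0 < α := lt_of_lt_of_le one_pos h1
  refine ⟨le_trans h1 hαβ, ?_, ?_⟩
  · have : β • X - Y = (α • X - Y) + (β - α) • X := by rw [sub_smul]; abel
    rw [this]
    exact h2.add (psd_smul hX.posSemidef (by linarith))
  · have : Y - β⁻¹ • X = (Y - α⁻¹ • X) + (α⁻¹ - β⁻¹) • X := by rw [sub_smul]; abel
    rw [this]
    refine h3.add (psd_smul hX.posSemidef ?_)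
    have : β⁻¹ ≤ α⁻¹ := by
      apply inv_anti₀ hαpos hαβ
    linarith

theorem stmt_11 {n : ℕ} (X₁ X₂ Y₁ Y₂ : Matrix (Fin n) (Fin n) ℝ)
    (hX₁ : X₁.PosDef) (hX₂ : X₂.PosDef) (hY₁ : Y₁.PosDef) (hY₂ : Y₂.PosDef) :
    partMetric (X₁ + X₂) (Y₁ + Y₂) ≤ partMetric X₁ Y₁ + partMetric X₂ Y₂ := by
  have hset : ∀ (X Y : Matrix (Fin n) (Fin n) ℝ),
      partMetric X Y = sInf (Real.log '' pmSet X Y) := fun _ _ => rfl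
  have hbdd : ∀ (X Y : Matrix (Fin n) (Fin n) ℝ), BddBelow (Real.log '' pmSet X Y) := by
    intro X Y
    refine ⟨0, ?_⟩
    rintro x ⟨α, ⟨h1, -, -⟩, rfl⟩
    exact Real.log_nonneg h1
  -- key step : for α ∈ pmSet X₁ Y₁, β ∈ pmSet X₂ Y₂, partMetric sum ≤ log α + log β
  have key : ∀ α ∈ pmSet X₁ Y₁, ∀ β ∈ pmSet X₂ Y₂,
      partMetric (X₁ + X₂) (Y₁ + Y₂) ≤ Real.log α + Real.log β := by
    intro α hα β hβ
    have hα1 : 1 ≤ α := hα.1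
    have hβ1 : 1 ≤ β := hβ.1
    set γ := max α β with hγ
    have hγ1 : α ≤ γ := le_max_left _ _
    have hγ2 : β ≤ γ := le_max_right _ _
    have hmem₁ : γ ∈ pmSet X₁ Y₁ := pmSet_mono hX₁ hγ1 hα
    have hmem₂ : γ ∈ pmSet X₂ Y₂ := pmSet_mono hX₂ hγ2 hβ
    have hmem : γ ∈ pmSet (X₁ + X₂) (Y₁ + Y₂) := by
      refine ⟨hmem₁.1, ?_, ?_⟩
      · have : γ • (X₁ + X₂) - (Y₁ + Y₂) = (γ • X₁ - Y₁) + (γ • X₂ - Y₂) := by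
          rw [smul_add]; abel
        rw [this]; exact hmem₁.2.1.add hmem₂.2.1
      · have : (Y₁ + Y₂) - γ⁻¹ • (X₁ + X₂) = (Y₁ - γ⁻¹ • X₁) + (Y₂ - γ⁻¹ • X₂) := by
          rw [smul_add]; abel
        rw [this]; exact hmem₁.2.2.add hmem₂.2.2
    have h1 : partMetric (X₁ + X₂) (Y₁ + Y₂) ≤ Real.log γ := by
      rw [hset]
      exact csInf_le (hbdd _ _) ⟨γ, hmem, rfl⟩
    have h2 : Real.log γ ≤ Real.log α + Real.log β := by
      rw [← Real.log_mul (by linarith) (by linarith)]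
      apply Real.log_le_log (by positivity)
      rcases max_cases α β with ⟨h, -⟩ | ⟨h, -⟩ <;> rw [hγ, h] <;> nlinarith
    linarith
  have hne₁ := pmSet_nonempty hX₁ hY₁
  have hne₂ := pmSet_nonempty hX₂ hY₂
  have step1 : ∀ β ∈ pmSet X₂ Y₂,
      partMetric (X₁ + X₂) (Y₁ + Y₂) - Real.log β ≤ partMetric X₁ Y₁ := by
    intro β hβ
    rw [hset X₁ Y₁]
    apply le_csInf (hne₁.image _)
    rintro b ⟨α, hα, rfl⟩
    have := key α hα β hβ
    linarith
  have step2 : partMetric (X₁ + X₂) (Y₁ + Y₂) - partMetric X₁ Y₁ ≤ partMetric X₂ Y₂ := by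
    rw [hset X₂ Y₂]
    apply le_csInf (hne₂.image _)
    rintro b ⟨β, hβ, rfl⟩
    have := step1 β hβ
    linarith
  linarith
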